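/- arXiv:2111.08903 — 2 statements merged into one kernel-verified Lean document; each statement's English description precedes it below -/
import Mathlib

section
/- Fix X ∈ St(n,k) and tangent vectors A, B ∈ T_X St(n,k). Let P_Z(B) = (I − ZZᵀ)B + ½ Z(ZᵀB − BᵀZ) for Z ∈ ℝ^{n×k}, and let II_X(A,B) be the normal component (projection via I − P_X) of the directional derivative at Z = X in direction A of Z ↦ P_Z(B). Then II_X(A,B) = −½ X(AᵀB + BᵀA). -/
open Matrix

attribute [local instance] Matrix.frobeniusNormedAddCommGroup Matrix.frobeniusNormedSpace

/-- The tangential projector of the Stiefel manifold at `Z`. -/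
noncomputable def stiefelProj {n k : ℕ} (Z B : Matrix (Fin n) (Fin k) ℝ) :
    Matrix (Fin n) (Fin k) ℝ :=
  (1 - Z * Zᵀ) * B + (1 / 2 : ℝ) • (Z * (Zᵀ * B - Bᵀ * Z))

/-!
Writing `P_Z(B) = B - ½ b(Z, Z)` with the bilinear map `b(Y, Z) = Y (ZᵀB + BᵀZ)`, the derivative
at `X` in direction `A` is `-½ (b(X, A) + b(A, X))`. Tangency of `B` kills `b(A, X)`, leaving
`-½ X S` with `S = AᵀB + BᵀA` symmetric, and the normal projection fixes `X S` because `XᵀX = 1`.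
-/

theorem Matrix.half_smul_mul_transpose_mul_add_of_isSymm {m n : Type*} [Fintype m] [Fintype n]
    [DecidableEq n] {X : Matrix m n ℝ} {S : Matrix n n ℝ} (hX : Xᵀ * X = 1) (hS : S.IsSymm) :
    (1 / 2 : ℝ) • (X * (Xᵀ * (X * S) + (X * S)ᵀ * X)) = X * S := by
  rw [← Matrix.mul_assoc, hX, transpose_mul, hS.eq, Matrix.mul_assoc, hX, Matrix.one_mul,
    Matrix.mul_one, ← two_smul ℝ S, Matrix.mul_smul]
  module

section Bilin

variable {m n : Type*} [Fintype m] [Fintype n]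

noncomputable def stiefelProjBilin (B : Matrix m n ℝ) :
    Matrix m n ℝ →L[ℝ] Matrix m n ℝ →L[ℝ] Matrix m n ℝ :=
  LinearMap.toContinuousBilinearMap <| LinearMap.mk₂ ℝ (fun Y Z => Y * (Zᵀ * B + Bᵀ * Z))
    (fun _ _ _ => Matrix.add_mul _ _ _)
    (fun _ _ _ => Matrix.smul_mul _ _ _)
    (fun Y Z₁ Z₂ => by simp only [transpose_add, Matrix.add_mul, Matrix.mul_add]; abel)
    (fun c Y Z => by simp only [transpose_smul, Matrix.smul_mul, Matrix.mul_smul, ← smul_add])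

theorem stiefelProjBilin_apply (B Y Z : Matrix m n ℝ) :
    stiefelProjBilin B Y Z = Y * (Zᵀ * B + Bᵀ * Z) := rfl

end Bilin

section Stiefel

variable {n k : ℕ}

theorem stiefelProj_eq_sub_stiefelProjBilin (Z B : Matrix (Fin n) (Fin k) ℝ) :
    stiefelProj Z B = B - (1 / 2 : ℝ) • stiefelProjBilin B Z Z := by
  rw [stiefelProj, stiefelProjBilin_apply, Matrix.sub_mul, Matrix.one_mul, Matrix.mul_sub,
    Matrix.mul_add, ← Matrix.mul_assoc]
  module

theorem HasFDerivAt.stiefelProj_apply_eq {X B : Matrix (Fin n) (Fin k) ℝ}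
    {D : Matrix (Fin n) (Fin k) ℝ →L[ℝ] Matrix (Fin n) (Fin k) ℝ}
    (hD : HasFDerivAt (fun Z => stiefelProj Z B) D X) (A : Matrix (Fin n) (Fin k) ℝ) :
    D A = -((1 / 2 : ℝ) • (X * (Aᵀ * B + Bᵀ * A) + A * (Xᵀ * B + Bᵀ * X))) := by
  have hbilin :=
    (stiefelProjBilin B).hasFDerivAt_of_bilinear (hasFDerivAt_id X) (hasFDerivAt_id X)
  simp only [stiefelProj_eq_sub_stiefelProjBilin] at hD
  rw [hD.unique ((hbilin.const_smul (1 / 2 : ℝ)).const_sub B)]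
  rfl

end Stiefel

theorem stiefel_second_fundamental_form_general (n k : ℕ)
    (X A B : Matrix (Fin n) (Fin k) ℝ) (hX : Xᵀ * X = 1)
    (hB : Xᵀ * B + Bᵀ * X = 0)
    (D : Matrix (Fin n) (Fin k) ℝ →L[ℝ] Matrix (Fin n) (Fin k) ℝ)
    (hD : HasFDerivAt (fun Z : Matrix (Fin n) (Fin k) ℝ => stiefelProj Z B) D X) :
    (1 / 2 : ℝ) • (X * (Xᵀ * D A + (D A)ᵀ * X)) =
      -((1 / 2 : ℝ) • (X * (Aᵀ * B + Bᵀ * A))) := by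
  set S := -((1 / 2 : ℝ) • (Aᵀ * B + Bᵀ * A))
  have hS : S.IsSymm := by
    simp only [S, IsSymm, transpose_neg, transpose_smul, transpose_add, transpose_mul,
      transpose_transpose, add_comm]
  have hDA : D A = X * S := by
    rw [hD.stiefelProj_apply_eq, hB, Matrix.mul_zero, add_zero, Matrix.mul_neg, Matrix.mul_smul]
  rw [hDA, Matrix.half_smul_mul_transpose_mul_add_of_isSymm hX hS, Matrix.mul_neg, Matrix.mul_smul]

/-- The second fundamental form of the Stiefel manifold: the normal component of the
directional derivative of `Z ↦ P_Z(B)` at `X` in a tangent direction `A` equals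
`−½ X(AᵀB + BᵀA)`. -/
theorem stiefel_second_fundamental_form (n k : ℕ)
    (X A B : Matrix (Fin n) (Fin k) ℝ) (hX : Xᵀ * X = 1)
    (hA : Xᵀ * A + Aᵀ * X = 0) (hB : Xᵀ * B + Bᵀ * X = 0)
    (D : Matrix (Fin n) (Fin k) ℝ →L[ℝ] Matrix (Fin n) (Fin k) ℝ)
    (hD : HasFDerivAt (fun Z : Matrix (Fin n) (Fin k) ℝ => stiefelProj Z B) D X) :
    (1 / 2 : ℝ) • (X * (Xᵀ * D A + (D A)ᵀ * X)) =
      -((1 / 2 : ℝ) • (X * (Aᵀ * B + Bᵀ * A))) :=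
  stiefel_second_fundamental_form_general n k X A B hX hB D hD
end

section
/- Let s ∈ {−1,1}^k and λ₁,…,λ_k > 0 with s_iλ_i + s_jλ_j ≠ 0 for all i < j. Consider the diagonal quadratic form with diagonal values −½(s_iλ_i + s_jλ_j) for 1 ≤ i < j ≤ k and −s_jλ_j with multiplicity n−k for each 1 ≤ j ≤ k. Then its signature (number of positive eigenvalues minus number of negative eigenvalues) equals Σ_{j=1}^k s_j (j − n). -/
open Finset

/-- The signature (number of positive minus number of negative eigenvalues) of the
diagonal second fundamental form of the Stiefel manifold at the critical point indexed
by `s`, paired with `Ξ = diag(λ₁,…,λ_k)`, `λ₁ > ⋯ > λ_k > 0`, equals `Σ_j s_j (j − n)`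
(with `1`-based indexing of `j`). -/
theorem stiefel_II_signature (n k : ℕ) (hk : k ≤ n) (s l : Fin k → ℝ)
    (hs : ∀ j, s j = 1 ∨ s j = -1) (hl : ∀ j, 0 < l j) (hstrict : StrictAnti l)
    (hne : ∀ i j : Fin k, i < j → s i * l i + s j * l j ≠ 0) :
    ((∑ i, ∑ j ∈ Finset.Ioi i,
        (if 0 < -(1 / 2 : ℝ) * (s i * l i + s j * l j) then (1 : ℝ) else -1)) +
      ∑ j, ((n : ℝ) - k) * (if 0 < -(s j * l j) then (1 : ℝ) else -1)) =
    ∑ j, s j * (((j : ℕ) + 1 : ℝ) - n) := by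
  have h1 : ∀ i j : Fin k, i < j →
      (if 0 < -(1 / 2 : ℝ) * (s i * l i + s j * l j) then (1 : ℝ) else -1) = -s i := by
    intro i j hij
    have h2 := hstrict hij
    rcases hs i with h | h <;> rcases hs j with h' | h' <;> rw [h, h'] <;>
      split_ifs with hc <;> norm_num <;> nlinarith [hl i, hl j]
  have h2 : ∀ j : Fin k, (if 0 < -(s j * l j) then (1 : ℝ) else -1) = -s j := by
    intro j
    rcases hs j with h | h <;> rw [h] <;>
      split_ifs with hc <;> norm_num <;> nlinarith [hl j]
  have e1 : ∀ i : Fin k, ∑ j ∈ Finset.Ioi i,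
      (if 0 < -(1 / 2 : ℝ) * (s i * l i + s j * l j) then (1 : ℝ) else -1)
      = ((k : ℝ) - 1 - i) * (-s i) := by
    intro i
    rw [Finset.sum_congr rfl fun j hj => h1 i j (Finset.mem_Ioi.mp hj),
      Finset.sum_const, Fin.card_Ioi, nsmul_eq_mul]
    have hik : (i : ℕ) < k := i.isLt
    have : ((k - 1 - (i : ℕ) : ℕ) : ℝ) = (k : ℝ) - 1 - i := by
      have h1k : 1 ≤ k := Nat.one_le_iff_ne_zero.mpr (by omega)
      push_cast [Nat.cast_sub (by omega : (i:ℕ) ≤ k - 1), Nat.cast_sub h1k]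
      ring
    rw [this]
  simp only [e1, h2]
  rw [← Finset.sum_add_distrib]
  apply Finset.sum_congr rfl
  intro i _
  ring
end
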